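/- Let k be a positive integer and n = 2^k − 1. Then there exists an orientation of the n-cube in which every vertex has in-degree (n−1)/2 or n; moreover one can construct it so that the vertices of in-degree n are exactly the elements of a perfect 1-error-correcting code in the n-cube. -/

import Mathlib

/-- Flip coordinate `i` of a binary `n`-tuple. -/
def flipBit {n : ℕ} (v : Fin n → ZMod 2) (i : Fin n) : Fin n → ZMod 2 :=
  Function.update v i (v i + 1)

/-- An orientation of the `n`-cube: to each edge (a pair of vertices differing in
exactly one coordinate) we assign a head, one of its two endpoints.  The edge at
vertex `v` in direction `i` joins `v` and `flipBit v i`; `head v i` is the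
assigned head of that edge, which must be one of the endpoints and must not
depend on from which endpoint the edge is viewed. -/
structure CubeOrientation (n : ℕ) where
  head : (Fin n → ZMod 2) → Fin n → (Fin n → ZMod 2)
  head_mem : ∀ v i, head v i = v ∨ head v i = flipBit v i
  compatible : ∀ v i, head (flipBit v i) i = head v i

/-- The in-degree of a vertex `v`: the number of edges incident to `v`
whose head is `v`. -/
def CubeOrientation.inDeg {n : ℕ} (o : CubeOrientation n) (v : Fin n → ZMod 2) : ℕ :=
  (Finset.univ.filter fun i : Fin n => o.head v i = v).card

/-- A perfect 1-error-correcting code in the `n`-cube: every vertex is within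
Hamming distance 1 of exactly one codeword. -/
def IsPerfectCode {n : ℕ} (H : Set (Fin n → ZMod 2)) : Prop :=
  ∀ v : Fin n → ZMod 2, ∃! h, h ∈ H ∧ hammingDist v h ≤ 1

/-!
The code is the Hamming code: enumerate the nonzero vectors of `𝔽₂ᵏ` as `e₁, …, eₙ` and take the
kernel of the syndrome map `v ↦ ∑ vᵢ eᵢ`. Adjacent vertices have distinct syndromes, so a
tournament on `𝔽₂ᵏ` orients the cube: the edge `{v, w}` points at `v` when the syndrome of `v`
beats that of `w`. The syndromes of the `n` neighbours of `v` are exactly the other elements of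
`𝔽₂ᵏ`, so the in-degree of `v` is the score of its syndrome. Take the tournament in which `0`
beats everything and the `n` (odd) nonzero vectors form the cyclic regular tournament, in which
each vertex beats the next `(n - 1) / 2`.
-/

section Tournament

variable {α β : Type*}

structure IsTournament (R : α → α → Prop) : Prop where
  asymm : ∀ ⦃a b⦄, R a b → ¬ R b a
  total : ∀ ⦃a b⦄, a ≠ b → R a b ∨ R b a

noncomputable def score (R : α → α → Prop) (a : α) : ℕ := Nat.card {b // R a b}

namespace IsTournament

variable {R : α → α → Prop}

theorem irrefl (hR : IsTournament R) (a : α) : ¬ R a a := fun h => hR.asymm h h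

theorem not_rel_iff (hR : IsTournament R) {a b : α} (hab : a ≠ b) : ¬ R b a ↔ R a b :=
  ⟨fun h => (hR.total hab).resolve_right h, fun h => hR.asymm h⟩

theorem comap (hR : IsTournament R) (e : β ≃ α) : IsTournament fun a b => R (e a) (e b) :=
  ⟨fun _ _ h => hR.asymm h, fun _ _ hab => hR.total (e.injective.ne hab)⟩

end IsTournament

theorem score_comap (R : α → α → Prop) (e : β ≃ α) (a : β) :
    score (fun a b => R (e a) (e b)) a = score R (e a) :=
  Nat.card_congr (e.subtypeEquiv fun _ => Iff.rfl)

def withSource (R : α → α → Prop) : Option α → Option α → Prop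
  | none, none => False
  | none, some _ => True
  | some _, none => False
  | some a, some b => R a b

theorem IsTournament.withSource {R : α → α → Prop} (hR : IsTournament R) :
    IsTournament (withSource R) where
  asymm
    | none, some _, _, h | some _, none, h, _ => h
    | some _, some _, h, h' => hR.asymm h h'
  total
    | none, none, h => absurd rfl h
    | none, some _, _ => .inl trivial
    | some _, none, _ => .inr trivial
    | some _, some _, h => hR.total (by simpa using h)

theorem score_withSource_none (R : α → α → Prop) : score (withSource R) none = Nat.card α :=
  Nat.card_congr <| (Equiv.subtypeEquivRight fun b => by cases b <;> simp [withSource]).trans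
    (Equiv.optionIsSomeEquiv α)

theorem score_withSource_some (R : α → α → Prop) (a : α) :
    score (withSource R) (some a) = score R a :=
  Nat.card_congr
    { toFun
        | ⟨some b, hb⟩ => ⟨b, hb⟩
      invFun b := ⟨some b.1, b.2⟩
      left_inv | ⟨some _, _⟩ => rfl
      right_inv _ := rfl }

def cyclicTournament (m : ℕ) (x y : Fin m) : Prop :=
  (y - x : Fin m).val ∈ Finset.Icc 1 ((m - 1) / 2)

theorem isTournament_cyclicTournament {m : ℕ} (hm : Odd m) :
    IsTournament (cyclicTournament m) := by
  have key : ∀ x y : Fin m, x < y → (cyclicTournament m x y ↔ ¬ cyclicTournament m y x) := by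
    intro x y hxy
    obtain ⟨c, rfl⟩ := hm
    simp only [cyclicTournament, Finset.mem_Icc, Fin.coe_sub_iff_le.2 hxy.le,
      Fin.coe_sub_iff_lt.2 hxy]
    omega
  constructor
  · intro x y h
    rcases lt_trichotomy x y with hxy | rfl | hxy
    · exact (key x y hxy).1 h
    · simp [cyclicTournament, Fin.coe_sub_iff_le.2 le_rfl] at h
    · exact fun h' => (key y x hxy).1 h' h
  · intro x y h
    rcases h.lt_or_gt with hxy | hxy
    · by_contra! h'
      exact h'.1 ((key x y hxy).2 h'.2)
    · by_contra! h'
      exact h'.2 ((key y x hxy).2 h'.1)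

theorem score_cyclicTournament (m : ℕ) [NeZero m] (x : Fin m) :
    score (cyclicTournament m) x = (m - 1) / 2 := by
  calc score (cyclicTournament m) x
      = Nat.card {z : Fin m // z.val ∈ Finset.Icc 1 ((m - 1) / 2)} :=
        Nat.card_congr ((Equiv.subRight x).subtypeEquiv fun _ => Iff.rfl)
    _ = Nat.card {k : ℕ // k ∈ Finset.Icc 1 ((m - 1) / 2)} :=
        Nat.card_congr ((Fin.equivSubtype.subtypeEquiv fun _ => Iff.rfl).trans
          (Equiv.subtypeSubtypeEquivSubtype fun h => by simp only [Finset.mem_Icc] at h; omega))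
    _ = (m - 1) / 2 := by rw [Nat.card_eq_finsetCard, Nat.card_Icc, Nat.add_sub_cancel]

theorem exists_regular_tournament (α : Type*) [Finite α] (hα : Odd (Nat.card α)) :
    ∃ R : α → α → Prop, IsTournament R ∧ ∀ a, score R a = (Nat.card α - 1) / 2 := by
  have : NeZero (Nat.card α) := ⟨hα.pos.ne'⟩
  let e := Finite.equivFin α
  exact ⟨fun a b => cyclicTournament _ (e a) (e b), (isTournament_cyclicTournament hα).comap e,
    fun a => (score_comap _ e a).trans (score_cyclicTournament _ _)⟩

theorem exists_tournament_source_regular {α : Type*} [Finite α] [DecidableEq α] (p : α)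
    (hodd : Odd (Nat.card {a // a ≠ p})) :
    ∃ R : α → α → Prop, IsTournament R ∧ score R p = Nat.card {a // a ≠ p} ∧
      ∀ a ≠ p, score R a = (Nat.card {a // a ≠ p} - 1) / 2 := by
  obtain ⟨R, hR, hscore⟩ := exists_regular_tournament {a // a ≠ p} hodd
  let e := (Equiv.optionSubtypeNe p).symm
  refine ⟨fun a b => withSource R (e a) (e b), hR.withSource.comap e, ?_, fun a ha => ?_⟩
  · rw [score_comap, Equiv.optionSubtypeNe_symm_self, score_withSource_none]
  · rw [score_comap, Equiv.optionSubtypeNe_symm_of_ne ha, score_withSource_some, hscore]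

end Tournament

section Cube

variable {ι : Type*} [Fintype ι] [DecidableEq ι] {n : ℕ}

theorem hammingNorm_le_one_iff {d : ι → ZMod 2} :
    hammingNorm d ≤ 1 ↔ d = 0 ∨ ∃ i, d = Pi.single i 1 := by
  constructor
  · intro hd
    by_cases h0 : d = 0
    · exact .inl h0
    obtain ⟨i, hi⟩ := Function.ne_iff.1 h0
    refine .inr ⟨i, funext fun j => ?_⟩
    rcases eq_or_ne j i with rfl | hj
    · simpa using (by decide : ∀ z : ZMod 2, z ≠ 0 → z = 1) _ hi
    · rw [Pi.single_eq_of_ne hj]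
      by_contra hdj
      exact hj (Finset.card_le_one.1 hd j (by simpa using hdj) i (by simpa using hi))
  · rintro (rfl | ⟨i, rfl⟩)
    · simp
    · refine Finset.card_le_one.2 fun a ha b hb => ?_
      simp only [Finset.mem_filter, Finset.mem_univ, true_and, Pi.single_apply, ne_eq,
        ite_eq_right_iff, one_ne_zero, imp_false, not_not] at ha hb
      rw [ha, hb]

theorem flipBit_eq_add_single (v : Fin n → ZMod 2) (i : Fin n) :
    flipBit v i = v + Pi.single i 1 := by
  ext j
  rcases eq_or_ne j i with rfl | hj <;> simp [flipBit, *]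

theorem flipBit_ne (v : Fin n → ZMod 2) (i : Fin n) : flipBit v i ≠ v := by
  simp [flipBit_eq_add_single]

theorem flipBit_flipBit (v : Fin n → ZMod 2) (i : Fin n) : flipBit (flipBit v i) i = v := by
  rw [flipBit_eq_add_single, flipBit_eq_add_single, add_assoc, ← Pi.single_add,
    show (1 + 1 : ZMod 2) = 0 from rfl, Pi.single_zero, add_zero]

theorem hammingDist_le_one_iff {v w : Fin n → ZMod 2} :
    hammingDist v w ≤ 1 ↔ w = v ∨ ∃ i, w = flipBit v i := by
  rw [hammingDist_eq_hammingNorm, hammingNorm_le_one_iff, neg_add_eq_zero]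
  simp_rw [flipBit_eq_add_single, neg_add_eq_iff_eq_add, eq_comm (b := w)]

end Cube

namespace CubeOrientation

variable {n : ℕ} {V : Type*} {R : V → V → Prop} [DecidableRel R]

def ofLabel (hR : IsTournament R) (s : (Fin n → ZMod 2) → V)
    (hs : ∀ v i, s (flipBit v i) ≠ s v) : CubeOrientation n where
  head v i := if R (s v) (s (flipBit v i)) then v else flipBit v i
  head_mem v i := by split_ifs <;> simp
  compatible v i := by
    rw [flipBit_flipBit]
    by_cases h : R (s v) (s (flipBit v i))
    · simp [h, hR.asymm h]
    · simp [h, (hR.not_rel_iff (hs v i)).1 h]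

theorem inDeg_ofLabel (hR : IsTournament R) (s : (Fin n → ZMod 2) → V)
    (hs : ∀ v i, s (flipBit v i) ≠ s v) (v : Fin n → ZMod 2) :
    (ofLabel hR s hs).inDeg v = Nat.card {i // R (s v) (s (flipBit v i))} := by
  rw [inDeg, ← Fintype.card_subtype, ← Nat.card_eq_fintype_card]
  refine Nat.card_congr (Equiv.subtypeEquivRight fun i => ?_)
  simp [ofLabel, flipBit_ne]

end CubeOrientation

theorem card_subtype_rel_add {ι V : Type*} [AddGroup V] (E : ι ≃ {x : V // x ≠ 0})
    {R : V → V → Prop} (hR : ∀ a, ¬ R a a) (a : V) :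
    Nat.card {i // R a (a + E i)} = score R a := by
  let F : ι ≃ {b // b ≠ a} := E.trans ((Equiv.addLeft a).subtypeEquiv fun x => by simp)
  refine Nat.card_congr ((F.subtypeEquiv (q := fun b => R a b.1) fun _ => Iff.rfl).trans ?_)
  exact Equiv.subtypeSubtypeEquivSubtype fun {b} (h : R a b) (hb : b = a) => hR a (hb ▸ h)

section Syndrome

variable {n : ℕ} {V : Type*} [AddCommGroup V] [Module (ZMod 2) V]
  (E : Fin n ≃ {x : V // x ≠ 0})

def syndrome : (Fin n → ZMod 2) →ₗ[ZMod 2] V :=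
  Fintype.linearCombination (ZMod 2) fun i => (E i : V)

theorem syndrome_flipBit (v : Fin n → ZMod 2) (i : Fin n) :
    syndrome E (flipBit v i) = syndrome E v + E i := by
  simp [syndrome, flipBit_eq_add_single]

theorem syndrome_flipBit_ne (v : Fin n → ZMod 2) (i : Fin n) :
    syndrome E (flipBit v i) ≠ syndrome E v := by
  simp [syndrome_flipBit, (E i).2]

theorem isPerfectCode_syndrome : IsPerfectCode {v | syndrome E v = 0} := by
  intro v
  simp_rw [Set.mem_ofPred_eq, hammingDist_le_one_iff]
  by_cases hv : syndrome E v = 0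
  · refine ⟨v, ⟨hv, .inl rfl⟩, ?_⟩
    rintro w ⟨hw, rfl | ⟨i, rfl⟩⟩
    · rfl
    · simp [syndrome_flipBit, hv, (E i).2] at hw
  · set i₀ := E.symm ⟨-syndrome E v, neg_ne_zero.2 hv⟩
    have hi₀ : (E i₀ : V) = -syndrome E v := by simp [i₀]
    refine ⟨flipBit v i₀, ⟨by simp [syndrome_flipBit, hi₀], .inr ⟨i₀, rfl⟩⟩, ?_⟩
    rintro w ⟨hw, rfl | ⟨i, rfl⟩⟩
    · exact absurd hw hv
    · rw [syndrome_flipBit, add_eq_zero_iff_neg_eq', neg_eq_iff_eq_neg, ← hi₀] at hw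
      rw [E.injective (Subtype.ext hw)]

theorem inDeg_ofLabel_syndrome {R : V → V → Prop} [DecidableRel R] (hR : IsTournament R)
    (v : Fin n → ZMod 2) :
    (CubeOrientation.ofLabel hR (syndrome E) (syndrome_flipBit_ne E)).inDeg v =
      score R (syndrome E v) := by
  simp_rw [CubeOrientation.inDeg_ofLabel, syndrome_flipBit]
  exact card_subtype_rel_add E hR.irrefl _

end Syndrome

theorem hamming_sink_orientation (k : ℕ) (hk : 0 < k) (n : ℕ) (hn : n = 2 ^ k - 1) :
    ∃ (o : CubeOrientation n) (H : Set (Fin n → ZMod 2)),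
      IsPerfectCode H ∧
      (∀ v, o.inDeg v = (n - 1) / 2 ∨ o.inDeg v = n) ∧
      (∀ v, o.inDeg v = n ↔ v ∈ H) := by
  classical
  have hcard : Nat.card {x : Fin k → ZMod 2 // x ≠ 0} = n := by
    simp [Nat.card_eq_fintype_card, Fintype.card_subtype_compl, hn]
  have hodd : Odd n :=
    hn ▸ Nat.Even.sub_odd Nat.one_le_two_pow (Nat.even_pow.2 ⟨even_two, hk.ne'⟩) odd_one
  obtain ⟨R, hR, hscore₀, hscore⟩ :=
    exists_tournament_source_regular (0 : Fin k → ZMod 2) (hcard ▸ hodd)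
  rw [hcard] at hscore₀ hscore
  let E := (Finite.equivFinOfCardEq hcard).symm
  refine ⟨.ofLabel hR (syndrome E) (syndrome_flipBit_ne E), {v | syndrome E v = 0},
    isPerfectCode_syndrome E, fun v => ?_, fun v => ?_⟩ <;>
  rw [inDeg_ofLabel_syndrome] <;> by_cases hv : syndrome E v = 0 <;> simp [hv, hscore₀, hscore]
  have hn_pos : 0 < n := hodd.pos
  omega
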